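/- Let μ be a probability distribution over {−1,+1}^n and α ∈ (0,1). Then the following are equivalent: (a) for all z ∈ ℝ_{>0}^n, g_μ(z₁^α,…,z_n^α)^{1/α} ≤ ∏_{i=1}^n (μ_i(+1)z_i + μ_i(−1)); (b) the homogenization μ^hom over n-subsets of [n] ∪ [n̄] satisfies: for all w ∈ ℝ_{>0}^{2n}, g_{μ^hom}(w₁^α,…,w_{2n}^α)^{1/(nα)} ≤ (1/n)·∑_{i∈[n]∪[n̄]} Pr_{S∼μ^hom}[i ∈ S]·w_i. -/

import Mathlib

/-!
Write `w ∈ ℝ_{>0}^{[n] ∪ [n̄]}` pairwise as `w_ī · (z_i, 1)`. Both `g_{μ^hom}(w^α)^{1/α}` and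
`∏ᵢ (μ_i(+1) w_i + μ_i(−1) w_ī)` are multiplied by `∏ᵢ w_ī` under this pairwise scaling, so (a) is
equivalent to the homogeneous inequality `g_{μ^hom}(w^α)^{1/α} ≤ ∏ᵢ (μ_i(+1) w_i + μ_i(−1) w_ī)`.
Its `n`-th root implies (b) by AM-GM. Conversely, scaling each pair so that every factor of the
product equals `1` makes the arithmetic and geometric means coincide, and (b) gives it back.
-/

open Finset

/-- Marginal probability `μ_i(b)` (with `true` encoding spin `+1`). -/
noncomputable def margProb {n : ℕ} (μ : (Fin n → Bool) → ℝ) (i : Fin n) (b : Bool) : ℝ :=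
  ∑ σ : Fin n → Bool, if σ i = b then μ σ else 0

/-- Generating function `g_μ(z) = ∑_σ μ(σ) ∏_{i : σ_i = +1} z_i`. -/
noncomputable def genFun {n : ℕ} (μ : (Fin n → Bool) → ℝ) (z : Fin n → ℝ) : ℝ :=
  ∑ σ : Fin n → Bool, μ σ * ∏ i : Fin n, if σ i then z i else 1

/-- Generating function of the homogenization `μ^hom` over `n`-subsets of
`[n] ⊕ [n̄]`: each configuration `σ` contributes the monomial
`∏_{i : σ_i = +1} w(inl i) · ∏_{i : σ_i = −1} w(inr i)`. -/
noncomputable def genFunHom {n : ℕ} (μ : (Fin n → Bool) → ℝ)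
    (w : (Fin n ⊕ Fin n) → ℝ) : ℝ :=
  ∑ σ : Fin n → Bool, μ σ * ∏ i : Fin n,
    if σ i then w (Sum.inl i) else w (Sum.inr i)

/-- `Pr_{S∼μ^hom}[j ∈ S]`: equals `μ_i(+1)` for `j = inl i` and `μ_i(−1)` for `j = inr i`. -/
noncomputable def homMarg {n : ℕ} (μ : (Fin n → Bool) → ℝ) (j : Fin n ⊕ Fin n) : ℝ :=
  Sum.elim (fun i => margProb μ i true) (fun i => margProb μ i false) j

theorem prod_rpow_one_div_le_mean {n : ℕ} (hn : 0 < n) (a : Fin n → ℝ)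
    (ha : ∀ i, 0 ≤ a i) : (∏ i, a i) ^ ((1 : ℝ) / n) ≤ (1 / n) * ∑ i, a i := by
  have h := Real.geom_mean_le_arith_mean univ (fun _ => 1) a (fun _ _ => zero_le_one)
    (by simpa using hn) (fun i _ => ha i)
  simpa [div_eq_inv_mul] using h

section

variable {n : ℕ} (μ : (Fin n → Bool) → ℝ)

lemma margProb_nonneg (hμ0 : ∀ σ, 0 ≤ μ σ) (i : Fin n) (b : Bool) : 0 ≤ margProb μ i b :=
  sum_nonneg fun σ _ => by split_ifs <;> simp [hμ0 σ]

lemma margProb_true_add_false (hμ1 : ∑ σ, μ σ = 1) (i : Fin n) :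
    margProb μ i true + margProb μ i false = 1 := by
  rw [← hμ1, margProb, margProb, ← sum_add_distrib]
  exact sum_congr rfl fun σ _ => by cases σ i <;> simp

noncomputable def pairMean (w : Fin n ⊕ Fin n → ℝ) (i : Fin n) : ℝ :=
  margProb μ i true * w (Sum.inl i) + margProb μ i false * w (Sum.inr i)

def scalePairs (c : Fin n → ℝ) (w : Fin n ⊕ Fin n → ℝ) (j : Fin n ⊕ Fin n) : ℝ :=
  c (Sum.elim id id j) * w j

lemma sum_homMarg_mul (w : Fin n ⊕ Fin n → ℝ) :
    ∑ j, homMarg μ j * w j = ∑ i, pairMean μ w i := by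
  simp [Fintype.sum_sum_type, homMarg, pairMean, sum_add_distrib]

lemma pairMean_pos (hμ0 : ∀ σ, 0 ≤ μ σ) (hμ1 : ∑ σ, μ σ = 1) {w : Fin n ⊕ Fin n → ℝ}
    (hw : ∀ j, 0 < w j) (i : Fin n) : 0 < pairMean μ w i := by
  have hp := margProb_nonneg μ hμ0 i true
  have hq := margProb_nonneg μ hμ0 i false
  rcases hp.eq_or_lt with hp0 | hp0
  · have hq1 : margProb μ i false = 1 := by linarith [margProb_true_add_false μ hμ1 i]
    simp [pairMean, ← hp0, hq1, hw (Sum.inr i)]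
  · exact add_pos_of_pos_of_nonneg (mul_pos hp0 (hw _)) (mul_nonneg hq (hw _).le)

lemma pairMean_scalePairs (c : Fin n → ℝ) (w : Fin n ⊕ Fin n → ℝ) (i : Fin n) :
    pairMean μ (scalePairs c w) i = c i * pairMean μ w i := by
  simp only [pairMean, scalePairs, Sum.elim_inl, Sum.elim_inr, id]
  ring

lemma genFunHom_scalePairs (c : Fin n → ℝ) (w : Fin n ⊕ Fin n → ℝ) :
    genFunHom μ (scalePairs c w) = (∏ i, c i) * genFunHom μ w := by
  simp only [genFunHom, scalePairs, mul_sum]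
  refine sum_congr rfl fun σ _ => ?_
  have : ∀ i, (if σ i then c i * w (Sum.inl i) else c i * w (Sum.inr i)) =
      c i * if σ i then w (Sum.inl i) else w (Sum.inr i) := fun i => by split_ifs <;> rfl
  simp only [Sum.elim_inl, Sum.elim_inr, id, this, prod_mul_distrib]
  ring

lemma genFunHom_sumElim_one (z : Fin n → ℝ) : genFunHom μ (Sum.elim z 1) = genFun μ z := by
  simp [genFunHom, genFun]

lemma genFunHom_nonneg (hμ0 : ∀ σ, 0 ≤ μ σ) {w : Fin n ⊕ Fin n → ℝ} (hw : ∀ j, 0 ≤ w j) :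
    0 ≤ genFunHom μ w :=
  sum_nonneg fun σ _ => mul_nonneg (hμ0 σ) (prod_nonneg fun i _ => by split_ifs <;> apply hw)

lemma rpow_genFunHom_rpow_scalePairs {α : ℝ} (hα : 0 < α) (hμ0 : ∀ σ, 0 ≤ μ σ)
    {c : Fin n → ℝ} (hc : ∀ i, 0 ≤ c i) {w : Fin n ⊕ Fin n → ℝ} (hw : ∀ j, 0 ≤ w j) :
    genFunHom μ (fun j => scalePairs c w j ^ α) ^ (1 / α) =
      (∏ i, c i) * genFunHom μ (fun j => w j ^ α) ^ (1 / α) := by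
  have hscale : (fun j => scalePairs c w j ^ α) =
      scalePairs (fun i => c i ^ α) (fun j => w j ^ α) :=
    funext fun j => Real.mul_rpow (hc _) (hw j)
  have hG := genFunHom_nonneg μ hμ0 fun j => Real.rpow_nonneg (hw j) α
  have hC := prod_nonneg fun i (_ : i ∈ univ) => hc i
  rw [hscale, genFunHom_scalePairs, Real.finsetProd_rpow _ _ (fun i _ => hc i),
    Real.mul_rpow (Real.rpow_nonneg hC α) hG, ← Real.rpow_mul hC, mul_one_div_cancel hα.ne',
    Real.rpow_one]

def HomProductDominated (α : ℝ) : Prop :=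
  ∀ w : Fin n ⊕ Fin n → ℝ, (∀ j, 0 < w j) →
    genFunHom μ (fun j => w j ^ α) ^ (1 / α) ≤ ∏ i, pairMean μ w i

lemma rpow_sumElim_one (α : ℝ) (z : Fin n → ℝ) :
    (fun j => (Sum.elim z 1 : Fin n ⊕ Fin n → ℝ) j ^ α) = Sum.elim (fun i => z i ^ α) 1 := by
  ext (i | i) <;> simp

lemma pairMean_sumElim_one (z : Fin n → ℝ) (i : Fin n) :
    pairMean μ (Sum.elim z 1) i = margProb μ i true * z i + margProb μ i false := by
  simp [pairMean]

theorem homProductDominated_iff {α : ℝ} (hα : 0 < α) (hμ0 : ∀ σ, 0 ≤ μ σ) :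
    HomProductDominated μ α ↔ ∀ z : Fin n → ℝ, (∀ i, 0 < z i) →
      (genFun μ fun i => z i ^ α) ^ ((1 : ℝ) / α)
        ≤ ∏ i : Fin n, (margProb μ i true * z i + margProb μ i false) := by
  constructor
  · intro h z hz
    simpa [rpow_sumElim_one, genFunHom_sumElim_one, pairMean_sumElim_one] using
      h (Sum.elim z 1) (by rintro (i | i) <;> simp [hz i])
  · intro h w hw
    set z : Fin n → ℝ := fun i => w (Sum.inl i) / w (Sum.inr i)
    have hw_eq : w = scalePairs (fun i => w (Sum.inr i)) (Sum.elim z 1) := by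
      ext (i | i) <;> simp [scalePairs, z, mul_div_cancel₀ _ (hw (Sum.inr i)).ne']
    have hz : ∀ i, 0 < z i := fun i => div_pos (hw _) (hw _)
    rw [hw_eq, rpow_genFunHom_rpow_scalePairs μ hα hμ0 (fun i => (hw _).le)
      (by rintro (i | i) <;> simp [(hz i).le])]
    simp only [pairMean_scalePairs, prod_mul_distrib, rpow_sumElim_one, genFunHom_sumElim_one,
      pairMean_sumElim_one]
    exact mul_le_mul_of_nonneg_left (h z hz) (prod_nonneg fun i _ => (hw _).le)

theorem homProductDominated_iff_entropicIndependence (hn : 0 < n) {α : ℝ} (hα : 0 < α)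
    (hμ0 : ∀ σ, 0 ≤ μ σ) (hμ1 : ∑ σ, μ σ = 1) :
    HomProductDominated μ α ↔ ∀ w : (Fin n ⊕ Fin n) → ℝ, (∀ j, 0 < w j) →
      (genFunHom μ fun j => w j ^ α) ^ ((1 : ℝ) / (n * α))
        ≤ (1 / n) * ∑ j : Fin n ⊕ Fin n, homMarg μ j * w j := by
  have hexp : (1 : ℝ) / (n * α) = 1 / α * (1 / n) := by rw [one_div_mul_one_div, mul_comm]
  constructor
  · intro h w hw
    have hG := genFunHom_nonneg μ hμ0 fun j => Real.rpow_nonneg (hw j).le α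
    have hP := fun i => (pairMean_pos μ hμ0 hμ1 hw i).le
    calc (genFunHom μ fun j => w j ^ α) ^ ((1 : ℝ) / (n * α))
        = ((genFunHom μ fun j => w j ^ α) ^ (1 / α)) ^ ((1 : ℝ) / n) := by
          rw [hexp, Real.rpow_mul hG]
      _ ≤ (∏ i, pairMean μ w i) ^ ((1 : ℝ) / n) := by gcongr; exact h w hw
      _ ≤ (1 / n) * ∑ i, pairMean μ w i := prod_rpow_one_div_le_mean hn _ hP
      _ = (1 / n) * ∑ j, homMarg μ j * w j := by rw [sum_homMarg_mul]
  · intro h w hw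
    set c : Fin n → ℝ := fun i => (pairMean μ w i)⁻¹
    have hP := pairMean_pos μ hμ0 hμ1 hw
    have hc : ∀ i, 0 < c i := fun i => inv_pos.2 (hP i)
    have hcP : ∀ i, c i * pairMean μ w i = 1 := fun i => inv_mul_cancel₀ (hP i).ne'
    have hw' : ∀ j, 0 < scalePairs c w j := fun j => mul_pos (hc _) (hw j)
    have hG := genFunHom_nonneg μ hμ0 fun j => Real.rpow_nonneg (hw' j).le α
    have hmean : (1 / n : ℝ) * ∑ j, homMarg μ j * scalePairs c w j = 1 := by
      rw [sum_homMarg_mul]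
      simp only [pairMean_scalePairs, hcP, sum_const, card_univ, Fintype.card_fin, nsmul_eq_mul,
        mul_one]
      field_simp
    have h2 : genFunHom μ (fun j => scalePairs c w j ^ α) ^ (1 / α) ≤ 1 := by
      have := h _ hw'
      rw [hmean, hexp, Real.rpow_mul hG] at this
      exact (Real.rpow_le_rpow_iff (Real.rpow_nonneg hG _) zero_le_one
        (one_div_pos.2 (Nat.cast_pos.2 hn))).1 (this.trans_eq (Real.one_rpow _).symm)
    rw [rpow_genFunHom_rpow_scalePairs μ hα hμ0 (fun i => (hc i).le) (fun j => (hw j).le)] at h2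
    refine le_of_mul_le_mul_left (h2.trans_eq ?_) (prod_pos fun i _ => hc i)
    rw [← prod_mul_distrib, prod_congr rfl fun i _ => hcP i, prod_const_one]

end

theorem product_domination_iff_entropic_independence {n : ℕ} (hn : 0 < n) (α : ℝ)
    (hα : α ∈ Set.Ioo (0 : ℝ) 1) (μ : (Fin n → Bool) → ℝ)
    (hμ0 : ∀ σ, 0 ≤ μ σ) (hμ1 : ∑ σ : Fin n → Bool, μ σ = 1) :
    (∀ z : Fin n → ℝ, (∀ i, 0 < z i) →
        (genFun μ fun i => z i ^ α) ^ ((1 : ℝ) / α)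
          ≤ ∏ i : Fin n, (margProb μ i true * z i + margProb μ i false)) ↔
    (∀ w : (Fin n ⊕ Fin n) → ℝ, (∀ j, 0 < w j) →
        (genFunHom μ fun j => w j ^ α) ^ ((1 : ℝ) / (n * α))
          ≤ (1 / n) * ∑ j : Fin n ⊕ Fin n, homMarg μ j * w j) :=
  (homProductDominated_iff μ hα.1 hμ0).symm.trans
    (homProductDominated_iff_entropicIndependence μ hn hα.1 hμ0 hμ1)
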